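/- Let p be a prime and α a positive integer. Every pair of adjacent vertices of G_{ℤ/p^αℤ} dominates the graph; consequently, in any strong edge coloring of G_{ℤ/p^αℤ} all edges receive distinct colors, and the strong chromatic index of G_{ℤ/p^αℤ} equals (1/2)·p^(2α-1)·(p-1). -/

import Mathlib

/-- The unitary Cayley graph of a commutative ring: `a` is adjacent to `b`
iff `a ≠ b` and `a - b` is a unit. -/
def unitaryCayley (X : Type*) [CommRing X] : SimpleGraph X where
  Adj a b := a ≠ b ∧ IsUnit (a - b)
  symm := by
    constructor
    rintro a b ⟨h1, h2⟩
    exact ⟨h1.symm, neg_sub a b ▸ h2.neg⟩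
  loopless := by constructor; rintro a ⟨h, _⟩; exact h rfl

/-- An edge coloring is strong if any two distinct edges whose endpoints coincide or are
adjacent receive different colors. -/
def IsStrongEdgeColoring {V : Type*} (G : SimpleGraph V) {k : ℕ}
    (C : G.edgeSet → Fin k) : Prop :=
  ∀ e f : G.edgeSet, e ≠ f →
    (∃ v w, v ∈ (e : Sym2 V) ∧ w ∈ (f : Sym2 V) ∧ (v = w ∨ G.Adj v w)) → C e ≠ C f

/-- The strong chromatic index: the least number of colors in a strong edge coloring. -/
noncomputable def strongChromaticIndex {V : Type*} (G : SimpleGraph V) : ℕ :=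
  sInf {k | ∃ C : G.edgeSet → Fin k, IsStrongEdgeColoring G C}

/-! `ZMod (p ^ α)` is a local ring, so a sum of two non-units is a non-unit. If `a - b` is a unit,
then for every vertex `v` one of `a - v`, `v - b` is a unit, i.e. the edge `ab` dominates the
graph. Hence any two edges of the unitary Cayley graph are at distance at most one, a strong edge
coloring must be injective, and the strong chromatic index is the number of edges,
`p ^ α * φ(p ^ α) / 2`. -/

open SimpleGraph

section UnitaryCayley

variable {R : Type*} [CommRing R]

theorem unitaryCayley_adj_iff [Nontrivial R] {a b : R} :
    (unitaryCayley R).Adj a b ↔ IsUnit (a - b) :=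
  ⟨And.right, fun h ↦ ⟨fun hab ↦ not_isUnit_zero (by rwa [hab, sub_self] at h), h⟩⟩

theorem unitaryCayley_eq_or_eq_or_adj_or_adj [IsLocalRing R] {a b : R}
    (hab : (unitaryCayley R).Adj a b) (v : R) :
    v = a ∨ v = b ∨ (unitaryCayley R).Adj v a ∨ (unitaryCayley R).Adj v b := by
  simp only [unitaryCayley_adj_iff] at hab ⊢
  rw [← sub_add_sub_cancel a v b] at hab
  rcases IsLocalRing.isUnit_or_isUnit_of_isUnit_add hab with h | h
  · exact .inr (.inr (.inl (neg_sub a v ▸ h.neg)))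
  · exact .inr (.inr (.inr h))

theorem card_neighborSet_unitaryCayley [Nontrivial R] (v : R) :
    Nat.card ((unitaryCayley R).neighborSet v) = Nat.card Rˣ := by
  have hunits : Set.range ((↑) : Rˣ → R) = {x | IsUnit x} := rfl
  rw [← Nat.card_range_of_injective Units.val_injective, hunits]
  exact Nat.card_congr <| (Equiv.subLeft v).subtypeEquiv fun w ↦ unitaryCayley_adj_iff

theorem two_mul_card_edgeSet_unitaryCayley [Finite R] [Nontrivial R] :
    2 * Nat.card (unitaryCayley R).edgeSet = Nat.card R * Nat.card Rˣ := by
  classical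
  have := Fintype.ofFinite R
  rw [Nat.card_eq_fintype_card, ← edgeFinset_card, ← sum_degrees_eq_twice_card_edges,
    Nat.card_eq_fintype_card (α := R)]
  have hdeg (v : R) : (unitaryCayley R).degree v = Nat.card Rˣ := by
    rw [← card_neighborSet_eq_degree, ← Nat.card_eq_fintype_card, card_neighborSet_unitaryCayley]
  simp only [hdeg, Finset.sum_const, Finset.card_univ, smul_eq_mul]

end UnitaryCayley

-- `ZMod (p ^ α)` is a quotient of the local ring `ℤ_[p]`.
theorem ZMod.isLocalRing_primePow {p α : ℕ} (hp : p.Prime) (hα : 0 < α) :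
    IsLocalRing (ZMod (p ^ α)) := by
  have := Fact.mk hp
  have : Fact (1 < p ^ α) := ⟨Nat.one_lt_pow hα.ne' hp.one_lt⟩
  exact .of_surjective' (PadicInt.toZModPow α) (ZMod.ringHom_surjective _)

section StrongEdgeColoring

variable {V : Type*} {G : SimpleGraph V} {k : ℕ} {C : G.edgeSet → Fin k}

theorem isStrongEdgeColoring_of_injective (hC : Function.Injective C) :
    IsStrongEdgeColoring G C :=
  fun _ _ hef _ ↦ hC.ne hef

theorem IsStrongEdgeColoring.injective_of_forall_adj
    (hdom : ∀ a b, G.Adj a b → ∀ v, v = a ∨ v = b ∨ G.Adj v a ∨ G.Adj v b)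
    (hC : IsStrongEdgeColoring G C) : Function.Injective C := by
  rintro ⟨e, he⟩ f hef
  by_contra hne
  induction e using Sym2.ind with | _ a b =>
  obtain ⟨c, hc⟩ : ∃ c, c ∈ (f : Sym2 V) := ⟨_, Sym2.out_fst_mem _⟩
  refine hC _ f hne ?_ hef
  rcases hdom a b he c with rfl | rfl | h | h
  · exact ⟨_, _, Sym2.mem_mk_left _ _, hc, .inl rfl⟩
  · exact ⟨_, _, Sym2.mem_mk_right _ _, hc, .inl rfl⟩
  · exact ⟨_, _, Sym2.mem_mk_left _ _, hc, .inr h.symm⟩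
  · exact ⟨_, _, Sym2.mem_mk_right _ _, hc, .inr h.symm⟩

theorem strongChromaticIndex_eq_card_edgeSet [Finite G.edgeSet]
    (h : ∀ (k : ℕ) (C : G.edgeSet → Fin k), IsStrongEdgeColoring G C → Function.Injective C) :
    strongChromaticIndex G = Nat.card G.edgeSet := by
  let e := Finite.equivFin G.edgeSet
  refine IsLeast.csInf_eq ⟨⟨e, isStrongEdgeColoring_of_injective e.injective⟩, ?_⟩
  rintro k ⟨C, hC⟩
  simpa using Nat.card_le_card_of_injective C (h k C hC)

end StrongEdgeColoring

theorem two_mul_card_edgeSet_unitaryCayley_zmod_primePow {p α : ℕ} (hp : p.Prime) (hα : 0 < α) :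
    2 * Nat.card (unitaryCayley (ZMod (p ^ α))).edgeSet = p ^ (2 * α - 1) * (p - 1) := by
  have : Fact (1 < p ^ α) := ⟨Nat.one_lt_pow hα.ne' hp.one_lt⟩
  rw [two_mul_card_edgeSet_unitaryCayley, Nat.card_zmod, Nat.card_eq_fintype_card,
    ZMod.card_units_eq_totient, Nat.totient_prime_pow hp hα, ← mul_assoc, ← pow_add,
    show α + (α - 1) = 2 * α - 1 by omega]

theorem unitaryCayley_strongChromaticIndex (p α : ℕ) (hp : p.Prime) (hα : 0 < α) :
    (∀ a b : ZMod (p ^ α), (unitaryCayley (ZMod (p ^ α))).Adj a b →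
        ∀ v, v = a ∨ v = b ∨ (unitaryCayley (ZMod (p ^ α))).Adj v a ∨
          (unitaryCayley (ZMod (p ^ α))).Adj v b) ∧
      (∀ (k : ℕ) (C : (unitaryCayley (ZMod (p ^ α))).edgeSet → Fin k),
        IsStrongEdgeColoring (unitaryCayley (ZMod (p ^ α))) C → Function.Injective C) ∧
      strongChromaticIndex (unitaryCayley (ZMod (p ^ α))) =
        p ^ (2 * α - 1) * (p - 1) / 2 := by
  have := ZMod.isLocalRing_primePow hp hα
  have : NeZero (p ^ α) := .of_pos (pow_pos hp.pos α)
  have hinj (k : ℕ) (C : (unitaryCayley (ZMod (p ^ α))).edgeSet → Fin k)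
      (hC : IsStrongEdgeColoring _ C) : Function.Injective C :=
    hC.injective_of_forall_adj fun _ _ ↦ unitaryCayley_eq_or_eq_or_adj_or_adj
  refine ⟨fun _ _ ↦ unitaryCayley_eq_or_eq_or_adj_or_adj, hinj, ?_⟩
  rw [strongChromaticIndex_eq_card_edgeSet hinj,
    ← two_mul_card_edgeSet_unitaryCayley_zmod_primePow hp hα, Nat.mul_div_cancel_left _ two_pos]
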